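/- arXiv:2009.11800 — 5 statements merged into one kernel-verified Lean document; each statement's English description precedes it below -/
import Mathlib

section
/- Let k be an infinite field and S = k[x_1, ..., x_e] a polynomial ring with the standard grading. Let I ⊆ S be a homogeneous ideal and h ∈ I a nonzero homogeneous element whose degree is minimal among the degrees of all nonzero homogeneous elements of I. Then there exist linear forms ℓ_2, ..., ℓ_e in S forming a regular sequence on S such that h ∉ (ℓ_2, ..., ℓ_e) and every homogeneous element of I + (ℓ_2, ..., ℓ_e) that does not lie in (ℓ_2, ..., ℓ_e) has degree at least deg h. -/
/-!
Since `k` is infinite, the nonzero polynomial `h * X 0` is nonzero at some point `a`: `h(a) ≠ 0` and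
`a 0 ≠ 0`.
The forms `X (i+1) - (a (i+1) / a 0) X 0` vanish at `a`, so `h` is not in the ideal they generate,
and they are the images of the variables `X 1, …, X n` under a triangular automorphism, hence a
regular sequence. The degree bound holds for any ideal `J` generated by forms: a homogeneous
`g = p + q ∉ J` of degree `n` with `p ∈ I`, `q ∈ J` has `p`'s degree-`n` component a nonzero element
of `I`, as `J` is homogeneous.
-/

open MvPolynomial

namespace MvPolynomial

variable {σ R : Type*} [CommRing R]

theorem mem_ideal_span_X_image_of_X_mul_mem {s : Set σ} {t : σ} (ht : t ∉ s)
    {p : MvPolynomial σ R} (hp : X t * p ∈ Ideal.span (X '' s : Set (MvPolynomial σ R))) :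
    p ∈ Ideal.span (X '' s : Set (MvPolynomial σ R)) := by
  rw [mem_ideal_span_X_image] at hp ⊢
  intro m hm
  have hmt : m + Finsupp.single t 1 ∈ (X t * p).support := by
    rwa [mem_support_iff, add_comm, coeff_X_mul, ← mem_support_iff]
  obtain ⟨i, his, hi⟩ := hp _ hmt
  have hit : t ≠ i := fun hti => ht (hti ▸ his)
  exact ⟨i, his, by simpa [Finsupp.single_apply, hit] using hi⟩

theorem one_notMem_ideal_span_X_image [Nontrivial R] (s : Set σ) :
    (1 : MvPolynomial σ R) ∉ Ideal.span (X '' s : Set (MvPolynomial σ R)) := by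
  rw [mem_ideal_span_X_image]
  intro h
  obtain ⟨i, -, hi⟩ := h 0 (by simp)
  exact hi rfl

theorem ofList_map_X (l : List σ) :
    Ideal.ofList (l.map X : List (MvPolynomial σ R)) = Ideal.span (X '' {i | i ∈ l}) := by
  simp only [Ideal.ofList, List.mem_map]
  rfl

theorem isRegular_map_X [Nontrivial R] {l : List σ} (hl : l.Nodup) :
    RingTheory.Sequence.IsRegular (MvPolynomial σ R) (l.map X : List (MvPolynomial σ R)) := by
  refine ⟨⟨fun i hi => ?_⟩, fun htop => ?_⟩
  · rw [List.length_map] at hi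
    have hnew : l[i] ∉ {j | j ∈ l.take i} := fun hmem =>
      List.disjoint_take_drop hl le_rfl hmem (List.drop_eq_getElem_cons hi ▸ List.mem_cons_self)
    rw [← List.map_take, ofList_map_X, Ideal.smul_eq_mul, Ideal.mul_top,
      isSMulRegular_quotient_iff_mem_of_smul_mem]
    intro p hp
    exact mem_ideal_span_X_image_of_X_mul_mem hnew (by simpa using hp)
  · rw [ofList_map_X, Ideal.smul_eq_mul, Ideal.mul_top] at htop
    exact one_notMem_ideal_span_X_image _ (htop ▸ Submodule.mem_top)

noncomputable def shear (j : σ) (c : σ → R) (hc : c j = 0) :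
    MvPolynomial σ R ≃ₐ[R] MvPolynomial σ R :=
  AlgEquiv.ofAlgHom (aeval fun m => X m - C (c m) * X j) (aeval fun m => X m + C (c m) * X j)
    (algHom_ext fun m => by simp [hc]) (algHom_ext fun m => by simp [hc])

@[simp]
theorem shear_X (j : σ) (c : σ → R) (hc : c j = 0) (m : σ) :
    shear j c hc (X m) = X m - C (c m) * X j :=
  aeval_X _ m

theorem homogeneousComponent_mem_span {s : Set (MvPolynomial σ R)}
    (hs : ∀ x ∈ s, ∃ m, x.IsHomogeneous m) {q : MvPolynomial σ R} (hq : q ∈ Ideal.span s)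
    (n : ℕ) : homogeneousComponent n q ∈ Ideal.span s := by
  let := MvPolynomial.gradedAlgebra (σ := σ) (R := R)
  exact homogeneousComponent_mem_of_mem (Ideal.homogeneous_span _ s hs) hq n

theorem le_of_isHomogeneous_of_mem_sup {I J : Ideal (MvPolynomial σ R)}
    (hI : ∀ p ∈ I, ∀ n, homogeneousComponent n p ∈ I)
    (hJ : ∀ q ∈ J, ∀ n, homogeneousComponent n q ∈ J) {d : ℕ}
    (hmin : ∀ g ∈ I, g ≠ 0 → ∀ n, g.IsHomogeneous n → d ≤ n)
    {g : MvPolynomial σ R} (hg : g ∈ I ⊔ J) (hgJ : g ∉ J) {n : ℕ} (hgn : g.IsHomogeneous n) :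
    d ≤ n := by
  obtain ⟨p, hp, q, hq, rfl⟩ := Submodule.mem_sup.mp hg
  have hpq : homogeneousComponent n p + homogeneousComponent n q = p + q := by
    rw [← map_add, homogeneousComponent_of_mem ((mem_homogeneousSubmodule n _).mpr hgn), if_pos rfl]
  refine hmin _ (hI p hp n) (fun hp0 => hgJ ?_) n (homogeneousComponent_isHomogeneous n p)
  rw [← hpq, hp0, zero_add]
  exact hJ q hq n

theorem exists_eval_ne_zero_and_ne_zero [IsDomain R] [Infinite R] {p : MvPolynomial σ R}
    (hp : p ≠ 0) (j : σ) : ∃ a : σ → R, eval a p ≠ 0 ∧ a j ≠ 0 := by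
  by_contra! H
  refine mul_ne_zero hp (X_ne_zero j) (funext fun a => ?_)
  by_cases ha : eval a p = 0 <;> simp [ha, H a]

end MvPolynomial

theorem RingTheory.Sequence.IsRegular.map_ringEquiv {A B : Type*} [CommRing A] [CommRing B]
    (φ : A ≃+* B) {rs : List A} (h : IsRegular A rs) : IsRegular B (rs.map φ) :=
  (φ.toAddEquiv.isRegular_congr (List.forall₂_map_right_iff.mpr
    (List.forall₂_same.mpr fun r _ x => map_mul φ r x))).mp h

section LinearForms

variable {k : Type*} [Field k] {n : ℕ}

-- These vanish at `a` only when `a 0 ≠ 0`: otherwise the division is junk.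
noncomputable def linearFormsVanishingAt (a : Fin (n + 1) → k) :
    Fin n → MvPolynomial (Fin (n + 1)) k :=
  fun i => X i.succ - C (a i.succ / a 0) * X 0

theorem isHomogeneous_linearFormsVanishingAt (a : Fin (n + 1) → k) (i : Fin n) :
    (linearFormsVanishingAt a i).IsHomogeneous 1 :=
  (isHomogeneous_X k _).sub (isHomogeneous_C_mul_X _ _)

theorem span_linearFormsVanishingAt_le_ker {a : Fin (n + 1) → k} (ha : a 0 ≠ 0) :
    Ideal.span (Set.range (linearFormsVanishingAt a)) ≤ RingHom.ker (eval a) := by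
  rw [Ideal.span_le]
  rintro _ ⟨i, rfl⟩
  simp [linearFormsVanishingAt, ha]

theorem isRegular_linearFormsVanishingAt (a : Fin (n + 1) → k) :
    RingTheory.Sequence.IsRegular (MvPolynomial (Fin (n + 1)) k)
      (List.ofFn (linearFormsVanishingAt a)) := by
  let c : Fin (n + 1) → k := Fin.cons 0 fun i => a i.succ / a 0
  have hforms : List.ofFn (linearFormsVanishingAt a)
      = ((List.ofFn Fin.succ).map X).map (shear 0 c rfl).toRingEquiv := by
    simp only [List.map_ofFn, Function.comp_def]
    congr 1
    funext i
    exact (shear_X 0 c rfl i.succ).symm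
  rw [hforms]
  exact (isRegular_map_X (List.nodup_ofFn.mpr (Fin.succ_injective n))).map_ringEquiv _

end LinearForms

theorem stmt0_general (k : Type*) [Field k] [Infinite k] (e : ℕ)
    (I : Ideal (MvPolynomial (Fin e) k))
    (hIhom : ∀ p ∈ I, ∀ n : ℕ, (homogeneousComponent n) p ∈ I)
    (h : MvPolynomial (Fin e) k) (hh0 : h ≠ 0) (dh : ℕ)
    (hmin : ∀ g ∈ I, g ≠ 0 → ∀ n : ℕ, g.IsHomogeneous n → dh ≤ n) :
    ∃ ℓ : Fin (e - 1) → MvPolynomial (Fin e) k,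
      (∀ i, (ℓ i).IsHomogeneous 1) ∧
      RingTheory.Sequence.IsRegular (MvPolynomial (Fin e) k) (List.ofFn ℓ) ∧
      h ∉ Ideal.span (Set.range ℓ) ∧
      (∀ g ∈ I ⊔ Ideal.span (Set.range ℓ), g ∉ Ideal.span (Set.range ℓ) →
        ∀ n : ℕ, g.IsHomogeneous n → dh ≤ n) := by
  have hdeg {ℓ : Fin (e - 1) → MvPolynomial (Fin e) k} (hℓ : ∀ i, (ℓ i).IsHomogeneous 1)
      (g) (hg : g ∈ I ⊔ Ideal.span (Set.range ℓ)) (hgℓ : g ∉ Ideal.span (Set.range ℓ))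
      (n : ℕ) (hgn : g.IsHomogeneous n) : dh ≤ n :=
    le_of_isHomogeneous_of_mem_sup hIhom
      (fun _ hq => homogeneousComponent_mem_span (by rintro _ ⟨i, rfl⟩; exact ⟨1, hℓ i⟩) hq)
      hmin hg hgℓ hgn
  cases e with
  | zero =>
    refine ⟨Fin.elim0, fun i => i.elim0, ?_, ?_, hdeg (fun i => i.elim0)⟩
    · exact RingTheory.Sequence.IsRegular.nil _ _
    · simpa using hh0
  | succ n =>
    obtain ⟨a, ha, ha0⟩ := exists_eval_ne_zero_and_ne_zero hh0 0
    refine ⟨linearFormsVanishingAt a, isHomogeneous_linearFormsVanishingAt a,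
      isRegular_linearFormsVanishingAt a, fun hmem => ha ?_,
      hdeg (isHomogeneous_linearFormsVanishingAt a)⟩
    exact RingHom.mem_ker.mp (span_linearFormsVanishingAt_le_ker ha0 hmem)

/-- **Lemma 3.1.** Let `k` be an infinite field and `S = k[x_1, …, x_e]` a standard graded
polynomial ring.  If `I ⊆ S` is a homogeneous ideal and `h ∈ I` is a nonzero homogeneous
element of minimal degree among nonzero homogeneous elements of `I`, then there is a regular
sequence of linear forms `ℓ_2, …, ℓ_e` such that `h ∉ (ℓ_2, …, ℓ_e)` and every homogeneous
element of `I + (ℓ_2, …, ℓ_e)` not lying in `(ℓ_2, …, ℓ_e)` has degree at least `deg h`. -/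
theorem stmt0 (k : Type*) [Field k] [Infinite k] (e : ℕ)
    (I : Ideal (MvPolynomial (Fin e) k))
    (hIhom : ∀ p ∈ I, ∀ n : ℕ, (homogeneousComponent n) p ∈ I)
    (h : MvPolynomial (Fin e) k) (hhI : h ∈ I) (hh0 : h ≠ 0) (dh : ℕ)
    (hhom : h.IsHomogeneous dh)
    (hmin : ∀ g ∈ I, g ≠ 0 → ∀ n : ℕ, g.IsHomogeneous n → dh ≤ n) :
    ∃ ℓ : Fin (e - 1) → MvPolynomial (Fin e) k,
      (∀ i, (ℓ i).IsHomogeneous 1) ∧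
      RingTheory.Sequence.IsRegular (MvPolynomial (Fin e) k) (List.ofFn ℓ) ∧
      h ∉ Ideal.span (Set.range ℓ) ∧
      (∀ g ∈ I ⊔ Ideal.span (Set.range ℓ), g ∉ Ideal.span (Set.range ℓ) →
        ∀ n : ℕ, g.IsHomogeneous n → dh ≤ n) :=
  stmt0_general k e I hIhom h hh0 dh hmin
end

section
/- Let (Q, m) be a Noetherian local ring and J ⊆ Q an ideal generated by a regular sequence g_1, ..., g_m on Q. If f ∈ J and f ∉ mJ, then there exist h_2, ..., h_m ∈ J such that J = (f, h_2, ..., h_m) and f, h_2, ..., h_m is a regular sequence on Q. -/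
/-!
Write `f = ∑ cⱼ gⱼ`. Since `f ∉ 𝔪J`, some coefficient `cᵢ` is a unit, so `f ≡ cᵢ gᵢ` modulo the
ideal generated by the other `gⱼ`; hence `f` may replace `gᵢ` as a generator of `J`. In a
Noetherian local ring a regular sequence stays regular under permutation, so we may move `gᵢ`
to the end; there, replacing it by `f` keeps the sequence regular, because `f` and `cᵢ gᵢ` act
identically on the quotient by the preceding elements. A final permutation moves `f` to the front.
-/

open IsLocalRing RingTheory.Sequence

theorem List.ofFn_perm_cons_removeNth {α : Type*} {n : ℕ} (g : Fin (n + 1) → α)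
    (i : Fin (n + 1)) : (List.ofFn g).Perm (g i :: List.ofFn (i.removeNth g)) := by
  refine (Equiv.Perm.ofFn_comp_perm i.cycleRange.symm g).symm.trans ?_
  rw [List.ofFn_succ]
  simp only [Function.comp_apply, Fin.cycleRange_symm_zero, Fin.cycleRange_symm_succ]
  rfl

theorem Ideal.ofList_ofFn {R : Type*} [CommSemiring R] {n : ℕ} (g : Fin n → R) :
    Ideal.ofList (List.ofFn g) = Ideal.span (Set.range g) :=
  congrArg Ideal.span (Set.ext (List.mem_ofFn' g))

theorem Ideal.sup_span_singleton_eq_of_sub_mul_mem {R : Type*} [CommRing R] {I : Ideal R}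
    {a b u : R} (hu : IsUnit u) (h : b - u * a ∈ I) :
    I ⊔ Ideal.span {b} = I ⊔ Ideal.span {a} := by
  rw [← Ideal.span_singleton_mul_left_unit hu a]
  have hb : b ∈ I ⊔ Ideal.span {u * a} := by
    simpa using Ideal.add_mem _ (Ideal.mem_sup_left h)
      (Ideal.mem_sup_right (Ideal.mem_span_singleton_self (u * a)))
  have ha : u * a ∈ I ⊔ Ideal.span {b} := by
    simpa using Ideal.sub_mem _ (Ideal.mem_sup_right (Ideal.mem_span_singleton_self b))
      (Ideal.mem_sup_left h)
  exact le_antisymm (sup_le le_sup_left ((Ideal.span_singleton_le_iff_mem _).mpr hb))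
    (sup_le le_sup_left ((Ideal.span_singleton_le_iff_mem _).mpr ha))

theorem Ideal.ofList_append_singleton_eq_of_sub_mul_mem {R : Type*} [CommRing R] {rs : List R}
    {a b u : R} (hu : IsUnit u) (h : b - u * a ∈ Ideal.ofList rs) :
    Ideal.ofList (rs ++ [b]) = Ideal.ofList (rs ++ [a]) := by
  rw [Ideal.ofList_append, Ideal.ofList_append, Ideal.ofList_singleton, Ideal.ofList_singleton,
    Ideal.sup_span_singleton_eq_of_sub_mul_mem hu h]

theorem isSMulRegular_quotient_smul_top_iff_of_sub_mem {R M : Type*} [CommRing R]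
    [AddCommGroup M] [Module R M] {I : Ideal R} {a b : R} (h : a - b ∈ I) :
    IsSMulRegular (M ⧸ (I • ⊤ : Submodule R M)) a ↔
      IsSMulRegular (M ⧸ (I • ⊤ : Submodule R M)) b := by
  refine Equiv.isSMulRegular_congr (e := Equiv.refl _) fun x => ?_
  induction x using Submodule.Quotient.induction_on with
  | _ x =>
    rw [Equiv.refl_apply, Equiv.refl_apply, ← Submodule.Quotient.mk_smul,
      ← Submodule.Quotient.mk_smul, Submodule.Quotient.eq, ← sub_smul]
    exact Submodule.smul_mem_smul h trivial

theorem RingTheory.Sequence.IsRegular.append_singleton_of_sub_mul_mem {R M : Type*}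
    [CommRing R] [AddCommGroup M] [Module R M] {rs : List R} {a b u : R} (hu : IsUnit u)
    (h : IsRegular M (rs ++ [a])) (hb : b - u * a ∈ Ideal.ofList rs) :
    IsRegular M (rs ++ [b]) := by
  obtain ⟨hweak, htop⟩ := h
  rw [isWeaklyRegular_append_iff, isWeaklyRegular_singleton_iff] at hweak
  refine ⟨?_, ?_⟩
  · rw [isWeaklyRegular_append_iff, isWeaklyRegular_singleton_iff,
      isSMulRegular_quotient_smul_top_iff_of_sub_mem hb]
    exact ⟨hweak.1, (hu.isSMulRegular _).mul hweak.2⟩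
  · rwa [Ideal.ofList_append_singleton_eq_of_sub_mul_mem hu hb]

theorem exists_isUnit_sub_mul_mem_span_removeNth {R : Type*} [CommRing R] [IsLocalRing R]
    {n : ℕ} {g : Fin (n + 1) → R} {f : R} (hf : f ∈ Ideal.span (Set.range g))
    (hfm : f ∉ maximalIdeal R * Ideal.span (Set.range g)) :
    ∃ i u, IsUnit u ∧ f - u * g i ∈ Ideal.span (Set.range (i.removeNth g)) := by
  obtain ⟨c, rfl⟩ := Ideal.mem_span_range_iff_exists_fun.mp hf
  obtain ⟨i, hi⟩ : ∃ i, IsUnit (c i) := by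
    by_contra! hc
    exact hfm <| Ideal.sum_mem _ fun i _ =>
      Ideal.mul_mem_mul ((mem_maximalIdeal _).mpr (hc i)) (Ideal.subset_span ⟨i, rfl⟩)
  refine ⟨i, c i, hi, ?_⟩
  rw [Fin.sum_univ_succAbove _ i, add_sub_cancel_left]
  exact Ideal.sum_mem _ fun j _ => Ideal.mul_mem_left _ _ (Ideal.subset_span ⟨j, rfl⟩)

/-- **Exchange lemma for regular sequences.** Let `(Q, 𝔪)` be a Noetherian local ring and
`J ⊆ Q` an ideal generated by a `Q`-regular sequence `g_1, …, g_m`.  If `f ∈ J` and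
`f ∉ 𝔪J`, then there are `h_2, …, h_m ∈ J` with `J = (f, h_2, …, h_m)` such that
`f, h_2, …, h_m` is a `Q`-regular sequence. -/
theorem stmt4 (Q : Type*) [CommRing Q] [IsLocalRing Q] [IsNoetherianRing Q]
    (m : ℕ) (g : Fin m → Q) (J : Ideal Q)
    (hJ : J = Ideal.span (Set.range g))
    (hreg : RingTheory.Sequence.IsRegular Q (List.ofFn g))
    (f : Q) (hfJ : f ∈ J) (hfmJ : f ∉ maximalIdeal Q * J) :
    ∃ h : Fin (m - 1) → Q,
      (∀ i, h i ∈ J) ∧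
      Ideal.span (insert f (Set.range h)) = J ∧
      RingTheory.Sequence.IsRegular Q (f :: List.ofFn h) := by
  subst hJ
  rcases m with _ | n
  · simp_all
  obtain ⟨i, u, hu, hfu⟩ := exists_isUnit_sub_mul_mem_span_removeNth hfJ hfmJ
  rw [← Ideal.ofList_ofFn] at hfu
  have hperm : (List.ofFn g).Perm (List.ofFn (i.removeNth g) ++ [g i]) :=
    (List.ofFn_perm_cons_removeNth g i).trans (List.perm_append_singleton _ _).symm
  have hreg' : IsRegular Q (List.ofFn (i.removeNth g) ++ [f]) :=
    (isRegular_of_perm hreg hperm).append_singleton_of_sub_mul_mem hu hfu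
  refine ⟨i.removeNth g, fun j => Ideal.subset_span ⟨_, rfl⟩, ?_,
    isRegular_of_perm hreg' (List.perm_append_singleton _ _)⟩
  calc Ideal.span (insert f (Set.range (i.removeNth g)))
      = Ideal.ofList (List.ofFn (i.removeNth g) ++ [f]) := by
        simp [Ideal.ofList_ofFn, Ideal.span_insert, sup_comm]
    _ = Ideal.ofList (List.ofFn (i.removeNth g) ++ [g i]) :=
        Ideal.ofList_append_singleton_eq_of_sub_mul_mem hu hfu
    _ = Ideal.ofList (List.ofFn g) := congrArg Ideal.span (Set.ext fun _ => hperm.mem_iff.symm)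
    _ = Ideal.span (Set.range g) := Ideal.ofList_ofFn g
end

section
/- Let k be a field, Q = k[x_1, ..., x_d] a polynomial ring, m = (x_1, ..., x_d), and f = x_1^{a_1} ⋯ x_d^{a_d} a monomial of total degree at least 2 with a_1 ≥ 1. Let J be the ideal of Q generated by f, by the elements x_1 − x_i for all i ≥ 2 with a_i ≠ 0, and by the variables x_j for all j with a_j = 0. Then f ∉ mJ. -/
open MvPolynomial

/-- **Example 5.5, property 4).** Let `k` be a field, `Q = k[x_1, …, x_d]`,
`𝔪 = (x_1, …, x_d)`, and `f = x_1^{a_1} ⋯ x_d^{a_d}` a monomial of total degree at least `2`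
with `a_1 ≥ 1`.  Let `J` be generated by `f`, by `x_1 - x_i` for `i ≠ 1` with `a_i ≠ 0`, and
by `x_j` for `a_j = 0`.  Then `f ∉ 𝔪J`. -/
theorem stmt8 (k : Type*) [Field k] (d : ℕ) [NeZero d]
    (a : Fin d → ℕ) (ha0 : 1 ≤ a 0) (hdeg : 2 ≤ ∑ i, a i)
    (f : MvPolynomial (Fin d) k) (hf : f = ∏ i, X i ^ a i)
    (m : Ideal (MvPolynomial (Fin d) k))
    (hm : m = Ideal.span (Set.range (X : Fin d → MvPolynomial (Fin d) k)))
    (J : Ideal (MvPolynomial (Fin d) k))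
    (hJ : J = Ideal.span ({f} ∪ ((fun i => X 0 - X i) '' {i : Fin d | i ≠ 0 ∧ a i ≠ 0})
      ∪ (X '' {j : Fin d | a j = 0}))) :
    f ∉ m * J := by
  intro hmem
  set n := ∑ i, a i with hn
  set g : Fin d → Polynomial k := fun i => if a i = 0 then 0 else Polynomial.X with hg
  set φ : MvPolynomial (Fin d) k →ₐ[k] Polynomial k := aeval g with hφ
  have hφf : φ f = Polynomial.X ^ n := by
    rw [hf, map_prod]
    have h1 : ∀ i ∈ Finset.univ, φ (X i ^ a i) = Polynomial.X ^ a i := by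
      intro i _
      rw [map_pow, hφ, aeval_X]
      by_cases h : a i = 0
      · simp [hg, h]
      · simp [hg, h]
    rw [Finset.prod_congr rfl h1, Finset.prod_pow_eq_pow_sum]
  have hmmap : Ideal.map φ m ≤ Ideal.span {Polynomial.X} := by
    rw [hm, Ideal.map_span]
    apply Ideal.span_le.2
    rintro _ ⟨_, ⟨i, rfl⟩, rfl⟩
    simp only [hφ, aeval_X, SetLike.mem_coe]
    by_cases h : a i = 0
    · simp [hg, h]
    · simp [hg, h, Ideal.mem_span_singleton]
  have hJmap : Ideal.map φ J ≤ Ideal.span {Polynomial.X ^ n} := by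
    rw [hJ, Ideal.map_span]
    apply Ideal.span_le.2
    rintro _ ⟨p, hp, rfl⟩
    rcases hp with (hp | ⟨i, ⟨hi0, hia⟩, rfl⟩) | ⟨j, hj, rfl⟩
    · rcases hp with rfl
      rw [SetLike.mem_coe, hφf]
      exact Ideal.mem_span_singleton_self _
    · have h0 : a 0 ≠ 0 := by omega
      simp [hφ, hg, hia, h0]
    · simp only [Set.mem_setOf_eq] at hj
      simp [hφ, hg, hj]
  have hX : φ f ∈ Ideal.span {Polynomial.X ^ (n + 1)} := by
    have h1 : φ f ∈ Ideal.map φ (m * J) := Ideal.mem_map_of_mem φ hmem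
    rw [Ideal.map_mul] at h1
    have h2 := Ideal.mul_mono hmmap hJmap h1
    rwa [Ideal.span_singleton_mul_span_singleton, ← pow_succ'] at h2
  rw [hφf, Ideal.mem_span_singleton] at hX
  have := Polynomial.natDegree_le_of_dvd hX (pow_ne_zero _ Polynomial.X_ne_zero)
  simp [Polynomial.natDegree_pow] at this
end

section
/- Let k be a field, Q = k[x_1, ..., x_d] a polynomial ring, m = (x_1, ..., x_d), and let f_1, ..., f_n be monomials of total degree at least 2 whose supports are pairwise incomparable, i.e., for i ≠ j the set of variables dividing f_i is not contained in the set of variables dividing f_j. Set I = (f_1, ..., f_n). For each i, choose a variable x_{b(i)} dividing f_i, and let J_i be the ideal of Q generated by f_i, by the elements x_{b(i)} − x_l for all variables x_l ≠ x_{b(i)} dividing f_i, and by all variables not dividing f_i. Then: I ⊆ J_i for every i; f_j ∈ mJ_i whenever j ≠ i; f_i ∉ mJ_i for every i; and for every g ∈ I, if g ∈ mJ_i for all i = 1, ..., n, then g ∈ mI. -/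
/-!
Restrict to the line `x_l = t` for `l ∈ supp f_i`, `x_l = 0` otherwise, on which the linear
generators of `J_i` vanish: it sends `f_i` to `t ^ deg f_i`, `J_i` into `(t ^ deg f_i)` and `𝔪`
into `(t)`, so `f_i ∉ 𝔪J_i`. For `j ≠ i`, incomparability of supports gives a variable of `J_i`
dividing `f_j`, and `deg f_j ≥ 2` leaves a cofactor in `𝔪`. Finally, if `g = ∑ c_j f_j` lies in
every `𝔪J_i`, then `c_i f_i ∈ 𝔪J_i`; since `𝔪` is maximal and `f_i ∈ J_i \ 𝔪J_i`, this forces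
`c_i ∈ 𝔪`.
-/

open MvPolynomial

theorem Ideal.mem_of_mul_mem_mul_of_notMem {Q : Type*} [CommRing Q] {m J : Ideal Q} [m.IsMaximal]
    {c f : Q} (hfJ : f ∈ J) (hf : f ∉ m * J) (hcf : c * f ∈ m * J) : c ∈ m := by
  by_contra hc
  obtain ⟨y, i, hi, hyi⟩ := Ideal.IsMaximal.exists_inv ‹_› hc
  apply hf
  have hdecomp : f = y * (c * f) + i * f := by rw [← mul_assoc, ← add_mul, hyi, one_mul]
  rw [hdecomp]
  exact add_mem (Ideal.mul_mem_left _ _ hcf) (Ideal.mul_mem_mul hi hfJ)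

theorem Ideal.mem_mul_span_range_of_forall_mem_mul {Q ι : Type*} [CommRing Q] [Fintype ι]
    {m : Ideal Q} [m.IsMaximal] {f : ι → Q} {J : ι → Ideal Q}
    (hfJ : ∀ i, f i ∈ J i) (hoff : ∀ i j, j ≠ i → f j ∈ m * J i) (hdiag : ∀ i, f i ∉ m * J i)
    {g : Q} (hg : g ∈ Ideal.span (Set.range f)) (hgJ : ∀ i, g ∈ m * J i) :
    g ∈ m * Ideal.span (Set.range f) := by
  classical
  obtain ⟨c, rfl⟩ := (Submodule.mem_span_range_iff_exists_fun _).mp hg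
  refine Ideal.sum_mem _ fun i _ => Ideal.mul_mem_mul ?_ (Ideal.subset_span ⟨i, rfl⟩)
  refine Ideal.mem_of_mul_mem_mul_of_notMem (hfJ i) (hdiag i) ?_
  have hsplit : c i * f i = ∑ j, c j • f j - ∑ j ∈ Finset.univ.erase i, c j * f j := by
    rw [← Finset.add_sum_erase _ _ (Finset.mem_univ i)]
    simp only [smul_eq_mul, add_sub_cancel_right]
  rw [hsplit]
  exact sub_mem (hgJ i) (Ideal.sum_mem _ fun j hj =>
    Ideal.mul_mem_left _ _ (hoff i j (Finset.ne_of_mem_erase hj)))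

namespace MvPolynomial

variable {σ R : Type*}

theorem idealOfVars_eq_ker_constantCoeff [CommRing R] :
    idealOfVars σ R = RingHom.ker constantCoeff := by
  refine le_antisymm (Ideal.span_le.2 (Set.range_subset_iff.2 fun l => constantCoeff_X R l)) ?_
  intro p hp
  rw [← pow_one (idealOfVars σ R), mem_pow_idealOfVars_iff]
  intro x hx
  rw [Nat.one_le_iff_ne_zero, ne_eq, Finsupp.degree_eq_zero_iff]
  rintro rfl
  exact mem_support_iff.1 hx (by rwa [RingHom.mem_ker, constantCoeff_eq] at hp)

instance isMaximal_idealOfVars [Field R] : (idealOfVars σ R).IsMaximal := by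
  rw [idealOfVars_eq_ker_constantCoeff]
  exact RingHom.ker_isMaximal_of_surjective _ fun r => ⟨C r, constantCoeff_C σ r⟩

theorem monomial_one_mem_idealOfVars_mul_span_X [CommSemiring R] [Nontrivial R] {s : σ →₀ ℕ}
    {l : σ} (hl : s l ≠ 0) (hs : 2 ≤ s.degree) :
    monomial s (1 : R) ∈ idealOfVars σ R * Ideal.span {X l} := by
  obtain ⟨t, rfl⟩ : ∃ t, s = t + Finsupp.single l 1 :=
    ⟨s - Finsupp.single l 1, (tsub_add_cancel_of_le (by simpa [Nat.one_le_iff_ne_zero])).symm⟩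
  rw [monomial_add_single, pow_one]
  refine Ideal.mul_mem_mul ?_ (Ideal.mem_span_singleton_self _)
  rw [← pow_one (idealOfVars σ R), monomial_mem_pow_idealOfVars_iff _ _ one_ne_zero]
  simp only [map_add, Finsupp.degree_single] at hs
  omega

variable [Fintype σ]

theorem prod_X_pow_eq_monomial_equivFunOnFinite [CommSemiring R] (a : σ → ℕ) :
    ∏ l, X l ^ a l = monomial (Finsupp.equivFunOnFinite.symm a) (1 : R) := by
  classical
  rw [prod_X_pow]
  congr
  exact Finsupp.ext fun l => by simp

theorem prod_X_pow_mem_idealOfVars_mul_span_X [CommSemiring R] [Nontrivial R] {a : σ → ℕ}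
    {l : σ} (hl : a l ≠ 0) (ha : 2 ≤ ∑ l, a l) :
    ∏ l, X l ^ a l ∈ idealOfVars σ R * Ideal.span {X l} := by
  rw [prod_X_pow_eq_monomial_equivFunOnFinite]
  exact monomial_one_mem_idealOfVars_mul_span_X (by simpa using hl)
    (by simpa [Finsupp.degree_eq_sum] using ha)

/-- `(x^a) + 𝔭`, where, for `b` in the support of `a`, `𝔭` is the ideal of the line spanned by
the indicator vector of that support. -/
noncomputable def supportLineIdeal [CommRing R] (a : σ → ℕ) (b : σ) : Ideal (MvPolynomial σ R) :=
  Ideal.span ({∏ l, X l ^ a l} ∪ ((fun l => X b - X l) '' {l | l ≠ b ∧ a l ≠ 0}) ∪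
    (X '' {l | a l = 0}))

theorem prod_X_pow_mem_supportLineIdeal [CommRing R] (a : σ → ℕ) (b : σ) :
    ∏ l, X l ^ a l ∈ supportLineIdeal (R := R) a b :=
  Ideal.subset_span (Or.inl (Or.inl rfl))

theorem X_mem_supportLineIdeal [CommRing R] {a : σ → ℕ} (b : σ) {l : σ} (hl : a l = 0) :
    X l ∈ supportLineIdeal (R := R) a b :=
  Ideal.subset_span (Or.inr ⟨l, hl, rfl⟩)

theorem prod_X_pow_notMem_idealOfVars_mul_supportLineIdeal [CommRing R] [Nontrivial R]
    {a : σ → ℕ} {b : σ} (hb : a b ≠ 0) :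
    ∏ l, X l ^ a l ∉ idealOfVars σ R * supportLineIdeal a b := by
  classical
  let φ : MvPolynomial σ R →ₐ[R] Polynomial R :=
    aeval fun l => if a l = 0 then 0 else Polynomial.X
  have hφf : φ (∏ l, X l ^ a l) = Polynomial.X ^ ∑ l, a l := by
    rw [map_prod, ← Finset.prod_pow_eq_pow_sum]
    refine Finset.prod_congr rfl fun l _ => ?_
    by_cases hl : a l = 0 <;> simp [φ, hl]
  have hm : (idealOfVars σ R).map φ ≤ Ideal.span {Polynomial.X} := by
    rw [Ideal.map_span, Ideal.span_le]
    rintro _ ⟨_, ⟨l, rfl⟩, rfl⟩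
    by_cases hl : a l = 0 <;> simp [φ, hl]
  have hJ : (supportLineIdeal a b).map φ ≤ Ideal.span {Polynomial.X ^ ∑ l, a l} := by
    rw [supportLineIdeal, Ideal.map_span, Ideal.span_le]
    rintro _ ⟨_, ((rfl | ⟨l, ⟨-, hl⟩, rfl⟩) | ⟨l, hl, rfl⟩), rfl⟩
    · rw [hφf]; exact Ideal.mem_span_singleton_self _
    · simp [φ, hb, hl]
    · simp [φ, hl.out]
  intro h
  have h' := Ideal.mul_mono hm hJ (Ideal.map_mul φ _ _ ▸ Ideal.mem_map_of_mem φ h)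
  rw [hφf, Ideal.span_singleton_mul_span_singleton, ← pow_succ', Ideal.mem_span_singleton,
    Polynomial.X_pow_dvd_iff] at h'
  simpa using h' _ (Nat.lt_succ_self _)

end MvPolynomial

/-- **Example 5.5 (Stanley-Reisner rings).** Let `k` be a field, `Q = k[x_1, …, x_d]`,
`𝔪 = (x_1, …, x_d)` and `f_1, …, f_n` monomials of total degree at least `2` with pairwise
incomparable supports; set `I = (f_1, …, f_n)`.  For each `i` choose a variable `x_{b(i)}`
dividing `f_i` and let `J_i` be generated by `f_i`, by `x_{b(i)} - x_l` for the other
variables `x_l` dividing `f_i`, and by all variables not dividing `f_i`.  Then `I ⊆ J_i` for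
every `i`; `f_j ∈ 𝔪J_i` for `j ≠ i`; `f_i ∉ 𝔪J_i`; and any `g ∈ I` lying in `𝔪J_i` for all
`i` lies in `𝔪I`. -/
theorem stmt9 (k : Type*) [Field k] (d n : ℕ)
    (a : Fin n → Fin d → ℕ)
    (f : Fin n → MvPolynomial (Fin d) k)
    (hf : ∀ i, f i = ∏ l, X l ^ a i l)
    (hdeg : ∀ i, 2 ≤ ∑ l, a i l)
    (hsupp : ∀ i j, i ≠ j → ¬ ({l : Fin d | a i l ≠ 0} ⊆ {l : Fin d | a j l ≠ 0}))
    (b : Fin n → Fin d) (hb : ∀ i, a i (b i) ≠ 0)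
    (I : Ideal (MvPolynomial (Fin d) k)) (hI : I = Ideal.span (Set.range f))
    (m : Ideal (MvPolynomial (Fin d) k))
    (hm : m = Ideal.span (Set.range (X : Fin d → MvPolynomial (Fin d) k)))
    (J : Fin n → Ideal (MvPolynomial (Fin d) k))
    (hJ : ∀ i, J i = Ideal.span ({f i}
      ∪ ((fun l => X (b i) - X l) '' {l : Fin d | l ≠ b i ∧ a i l ≠ 0})
      ∪ (X '' {l : Fin d | a i l = 0}))) :
    (∀ i, I ≤ J i) ∧
    (∀ i j, j ≠ i → f j ∈ m * J i) ∧
    (∀ i, f i ∉ m * J i) ∧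
    (∀ g ∈ I, (∀ i, g ∈ m * J i) → g ∈ m * I) := by
  have hJ' : ∀ i, J i = supportLineIdeal (a i) (b i) := fun i => by rw [hJ, hf]; rfl
  change m = idealOfVars (Fin d) k at hm
  subst hI hm
  have hfJ : ∀ i, f i ∈ J i := fun i => by
    rw [hf, hJ']; exact prod_X_pow_mem_supportLineIdeal _ _
  have hoff : ∀ i j, j ≠ i → f j ∈ idealOfVars (Fin d) k * J i := by
    intro i j hji
    obtain ⟨l, hlj, hli⟩ := Set.not_subset.1 (hsupp j i hji)
    rw [hf j, hJ']
    exact Ideal.mul_mono_right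
      ((Ideal.span_singleton_le_iff_mem _).2 (X_mem_supportLineIdeal _ (not_not.1 hli)))
      (prod_X_pow_mem_idealOfVars_mul_span_X hlj (hdeg j))
  have hdiag : ∀ i, f i ∉ idealOfVars (Fin d) k * J i := fun i => by
    rw [hf, hJ']; exact prod_X_pow_notMem_idealOfVars_mul_supportLineIdeal (hb i)
  refine ⟨fun i => Ideal.span_le.2 (Set.range_subset_iff.2 fun j => ?_), hoff, hdiag,
    fun g hg hgJ => Ideal.mem_mul_span_range_of_forall_mem_mul hfJ hoff hdiag hg hgJ⟩
  by_cases hji : j = i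
  · exact hji ▸ hfJ i
  · exact Ideal.mul_le_right (hoff i j hji)
end

section
/- Let k be a field with char k ≠ 2 and let Q = k⟦x, y, z⟧ be the formal power series ring in three variables, with maximal ideal m = (x, y, z). Set I = (x² + y² + z², xyz, x³) and J_1 = (x² + y² + z², y, x³). Then: xyz ∈ mJ_1; for all a_1, a_2, a_3 ∈ Q, if a_1(x² + y² + z²) + a_2 · xyz + a_3 · x³ ∈ mJ_1, then a_1 ∈ m and a_3 ∈ m; and for every g ∈ I with g ∈ mJ_1, there exists a ∈ Q such that g − a · xyz ∈ mI. -/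
/-!
Reducing modulo `y` kills both `xyz` and the generator `y` of `J₁`, so a relation
`a₁ q + a₂ xyz + a₃ x³ ∈ 𝔪J₁` (with `q = x² + y² + z²`) yields `y ∣ A q + B x³` with
`A ≡ a₁`, `B ≡ a₃` modulo `𝔪`. Comparing the coefficients of `z²`, `xz²` and `x³` then forces
`A(0) = B(0) = 0`. The last claim follows by taking `a = a₂`.
-/

open MvPowerSeries Finsupp

theorem Ideal.mem_mul_span_insert {R : Type*} [CommSemiring R] {m : Ideal R} {a g : R}
    {s : Set R} :
    g ∈ m * Ideal.span (insert a s) ↔ ∃ u ∈ m, ∃ r ∈ m * Ideal.span s, u * a + r = g := by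
  simp [Ideal.span_insert, Ideal.mul_sup, Submodule.mem_sup, Ideal.mem_mul_span_singleton]

namespace MvPowerSeries

section CommSemiring

variable {σ R : Type*} [CommSemiring R]

theorem mem_span_range_X_iff [Finite σ] {f : MvPowerSeries σ R} :
    f ∈ Ideal.span (Set.range X) ↔ constantCoeff f = 0 := by
  classical
  refine ⟨fun hf ↦ ?_, fun hf ↦ ?_⟩
  · refine (Ideal.span_le (I := RingHom.ker constantCoeff).mpr ?_) hf
    rintro _ ⟨i, rfl⟩
    exact constantCoeff_X i
  cases nonempty_fintype σ
  have hpick (d : σ →₀ ℕ) (hd : d ≠ 0) : ∃ i, d i ≠ 0 := by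
    simpa [Finsupp.ext_iff] using hd
  choose pick hpick using hpick
  let part (i : σ) : MvPowerSeries σ R :=
    fun d ↦ if h : d = 0 then 0 else if pick d h = i then coeff d f else 0
  have coeff_part (i : σ) (d : σ →₀ ℕ) :
      coeff d (part i) = if h : d = 0 then 0 else if pick d h = i then coeff d f else 0 := rfl
  have hsum : f = ∑ i, part i := by
    ext d
    by_cases hd : d = 0
    · simp [map_sum, coeff_part, hd, hf]
    · simp [map_sum, coeff_part, hd]
  rw [hsum]
  refine Ideal.sum_mem _ fun i _ ↦ ?_
  obtain ⟨g, hg⟩ : X i ∣ part i := X_dvd_iff.mpr fun d hdi ↦ by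
    rw [coeff_part]
    split_ifs with hd hi
    · rfl
    · exact absurd (hi ▸ hdi) (hpick d hd)
    · rfl
  rw [hg]
  exact Ideal.mul_mem_right _ _ (Ideal.subset_span ⟨i, rfl⟩)

theorem span_X_fin_three :
    Ideal.span {X 0, X 1, X 2} = Ideal.span (Set.range (X : Fin 3 → MvPowerSeries (Fin 3) R)) := by
  congr 1
  ext f
  simp [Fin.exists_fin_succ, eq_comm]

theorem constantCoeff_eq_zero_of_X_one_dvd {A B : MvPowerSeries (Fin 3) R}
    (h : X 1 ∣ A * (X 0 ^ 2 + X 1 ^ 2 + X 2 ^ 2) + B * X 0 ^ 3) :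
    constantCoeff A = 0 ∧ constantCoeff B = 0 := by
  have hcoeff (d : Fin 3 →₀ ℕ) (hd : d 1 = 0) := X_dvd_iff.mp h d hd
  have e1 := hcoeff (single 2 2) (by simp)
  have e2 := hcoeff (single 0 1 + single 2 2) (by simp)
  have e3 := hcoeff (single 0 3) (by simp)
  simp [X_pow_eq, mul_add, coeff_mul_monomial, single_le_iff, ← single_tsub] at e1 e2 e3
  exact ⟨e1, by simpa [e2] using e3⟩

end CommSemiring

theorem coeffs_mem_span_range_X_of_mem_mul {R : Type*} [CommRing R]
    {a₁ a₂ a₃ : MvPowerSeries (Fin 3) R}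
    (h : a₁ * (X 0 ^ 2 + X 1 ^ 2 + X 2 ^ 2) + a₂ * (X 0 * X 1 * X 2) + a₃ * X 0 ^ 3 ∈
      Ideal.span (Set.range X) *
        (Ideal.span {X 0 ^ 2 + X 1 ^ 2 + X 2 ^ 2, X 1, X 0 ^ 3} : Ideal (MvPowerSeries (Fin 3) R))) :
    a₁ ∈ Ideal.span (Set.range X) ∧ a₃ ∈ Ideal.span (Set.range X) := by
  obtain ⟨u, hu, r, hr, hur⟩ := Ideal.mem_mul_span_insert.mp h
  obtain ⟨v, -, r', hr', hvr⟩ := Ideal.mem_mul_span_insert.mp hr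
  obtain ⟨w, hw, hwr⟩ := Ideal.mem_mul_span_singleton.mp hr'
  have hdvd : X 1 ∣ (a₁ - u) * (X 0 ^ 2 + X 1 ^ 2 + X 2 ^ 2) + (a₃ - w) * X 0 ^ 3 :=
    ⟨v - a₂ * (X 0 * X 2), by linear_combination -hur - hvr - hwr⟩
  obtain ⟨h₁, h₃⟩ := constantCoeff_eq_zero_of_X_one_dvd hdvd
  rw [map_sub, sub_eq_zero] at h₁ h₃
  simp only [mem_span_range_X_iff] at hu hw ⊢
  exact ⟨h₁.trans hu, h₃.trans hw⟩

end MvPowerSeries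

theorem stmt11_general (k : Type*) [Field k]
    (x y z : MvPowerSeries (Fin 3) k)
    (hx : x = X 0) (hy : y = X 1) (hz : z = X 2)
    (m I J1 : Ideal (MvPowerSeries (Fin 3) k))
    (hm : m = Ideal.span {x, y, z})
    (hI : I = Ideal.span {x ^ 2 + y ^ 2 + z ^ 2, x * y * z, x ^ 3})
    (hJ1 : J1 = Ideal.span {x ^ 2 + y ^ 2 + z ^ 2, y, x ^ 3}) :
    x * y * z ∈ m * J1 ∧
    (∀ a₁ a₂ a₃ : MvPowerSeries (Fin 3) k,
      a₁ * (x ^ 2 + y ^ 2 + z ^ 2) + a₂ * (x * y * z) + a₃ * x ^ 3 ∈ m * J1 →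
        a₁ ∈ m ∧ a₃ ∈ m) ∧
    (∀ g ∈ I, g ∈ m * J1 →
      ∃ a : MvPowerSeries (Fin 3) k, g - a * (x * y * z) ∈ m * I) := by
  subst hx hy hz
  rw [span_X_fin_three] at hm
  subst hm hI hJ1
  refine ⟨?_, fun _ _ _ ↦ coeffs_mem_span_range_X_of_mem_mul, fun g hg hgJ ↦ ?_⟩
  · rw [show (X 0 * X 1 * X 2 : MvPowerSeries (Fin 3) k) = X 0 * X 2 * X 1 by ring]
    exact Ideal.mul_mem_mul (Ideal.mul_mem_right _ _ (Ideal.subset_span ⟨0, rfl⟩))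
      (Ideal.subset_span (by simp))
  obtain ⟨a₁, a₂, a₃, rfl⟩ := Submodule.mem_span_triple.mp hg
  simp only [smul_eq_mul] at hgJ ⊢
  obtain ⟨ha₁, ha₃⟩ := coeffs_mem_span_range_X_of_mem_mul hgJ
  refine ⟨a₂, ?_⟩
  rw [add_sub_right_comm, add_sub_cancel_right]
  exact add_mem (Ideal.mul_mem_mul ha₁ (Ideal.subset_span (by simp)))
    (Ideal.mul_mem_mul ha₃ (Ideal.subset_span (by simp)))

/-- **Example 5.3, detailed computation.** Let `k` be a field of characteristic `≠ 2` and
`Q = k⟦x,y,z⟧` with `𝔪 = (x,y,z)`, `I = (x²+y²+z², xyz, x³)` and `J₁ = (x²+y²+z², y, x³)`.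
Then `xyz ∈ 𝔪J₁`; if `a₁(x²+y²+z²) + a₂·xyz + a₃·x³ ∈ 𝔪J₁` then `a₁ ∈ 𝔪` and `a₃ ∈ 𝔪`;
and every `g ∈ I` with `g ∈ 𝔪J₁` satisfies `g - a·xyz ∈ 𝔪I` for some `a`. -/
theorem stmt11 (k : Type*) [Field k] (hchar : ringChar k ≠ 2)
    (x y z : MvPowerSeries (Fin 3) k)
    (hx : x = X 0) (hy : y = X 1) (hz : z = X 2)
    (m I J1 : Ideal (MvPowerSeries (Fin 3) k))
    (hm : m = Ideal.span {x, y, z})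
    (hI : I = Ideal.span {x ^ 2 + y ^ 2 + z ^ 2, x * y * z, x ^ 3})
    (hJ1 : J1 = Ideal.span {x ^ 2 + y ^ 2 + z ^ 2, y, x ^ 3}) :
    x * y * z ∈ m * J1 ∧
    (∀ a₁ a₂ a₃ : MvPowerSeries (Fin 3) k,
      a₁ * (x ^ 2 + y ^ 2 + z ^ 2) + a₂ * (x * y * z) + a₃ * x ^ 3 ∈ m * J1 →
        a₁ ∈ m ∧ a₃ ∈ m) ∧
    (∀ g ∈ I, g ∈ m * J1 →
      ∃ a : MvPowerSeries (Fin 3) k, g - a * (x * y * z) ∈ m * I) :=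
  stmt11_general k x y z hx hy hz m I J1 hm hI hJ1
end
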